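/- arXiv:1609.03890 — 3 statements merged into one kernel-verified Lean document; each statement's English description precedes it below -/
import Mathlib

section
/- Let F : ℝⁿ → ℝ be convex, and for x ∈ ℝⁿ let ∂F(x) = {p ∈ ℝⁿ : F(y) ≥ F(x) + p·(y−x) for all y ∈ ℝⁿ}. If x₁, x₂ : [0,T] → ℝⁿ are absolutely continuous curves satisfying xᵢ'(t) ∈ −∂F(xᵢ(t)) for a.e. t ∈ (0,T), then |x₁(t) − x₂(t)| ≤ |x₁(0) − x₂(0)| for every t ∈ [0,T]. In particular, two such curves with the same initial point coincide. -/
open MeasureTheory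


/-- The subdifferential of `F : ℝⁿ → ℝ` at `x`:
`∂F(x) = {p : F(y) ≥ F(x) + p·(y-x) for all y}`. -/
def subdiff {n : ℕ} (F : EuclideanSpace ℝ (Fin n) → ℝ) (x : EuclideanSpace ℝ (Fin n)) :
    Set (EuclideanSpace ℝ (Fin n)) :=
  {p | ∀ y, F x + (inner ℝ p (y - x) : ℝ) ≤ F y}

section Aux

open Set RealInnerProductSpace

variable {E : Type*} [NormedAddCommGroup E] [InnerProductSpace ℝ E] [CompleteSpace E]

lemma primitive_norm_sq (u : ℝ → E) (c : E) (t : ℝ)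
    (hu : IntegrableOn u (Ioc 0 t)) :
    ‖c + ∫ s in Ioc (0:ℝ) t, u s‖ ^ 2
      = ‖c‖ ^ 2 + 2 * ∫ s in Ioc (0:ℝ) t, ⟪c + ∫ r in Ioc (0:ℝ) s, u r, u s⟫ := by
  set μ := volume.restrict (Ioc (0:ℝ) t) with hμdef
  set w : ℝ → E := fun a => ∫ r in Ioc (0:ℝ) a, u r with hwdef
  have hu' : Integrable u μ := hu
  have hum : AEStronglyMeasurable u μ := hu'.1
  have huIcc : IntegrableOn u (Icc 0 t) := (integrableOn_Icc_iff_integrableOn_Ioc).mpr hu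
  have hwc : ContinuousOn w (Icc 0 t) := intervalIntegral.continuousOn_primitive huIcc
  set M : ℝ := ∫ s in Ioc (0:ℝ) t, ‖u s‖ with hMdef
  have hM : ∀ s ∈ Icc (0:ℝ) t, ‖w s‖ ≤ M := by
    intro s hs
    calc ‖w s‖ ≤ ∫ r in Ioc (0:ℝ) s, ‖u r‖ := norm_integral_le_integral_norm _
      _ ≤ M := setIntegral_mono_set hu.norm
          (Filter.Eventually.of_forall fun r => norm_nonneg _)
          (HasSubset.Subset.eventuallyLE (Ioc_subset_Ioc_right hs.2))
  have hwm : AEStronglyMeasurable w μ :=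
    (hwc.mono Ioc_subset_Icc_self).aestronglyMeasurable measurableSet_Ioc
  have hg_int : Integrable (fun s => ⟪w s, u s⟫) μ := by
    refine (hu'.norm.const_mul M).mono' (hwm.inner hum) ?_
    filter_upwards [ae_restrict_mem measurableSet_Ioc] with s hs
    calc ‖⟪w s, u s⟫‖ ≤ ‖w s‖ * ‖u s‖ := norm_inner_le_norm _ _
      _ ≤ M * ‖u s‖ :=
        mul_le_mul_of_nonneg_right (hM s (Ioc_subset_Icc_self hs)) (norm_nonneg _)
  set G : ℝ → ℝ → ℝ := fun s r => if s < r then ⟪u s, u r⟫ else 0 with hGdef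
  have hG_meas : AEStronglyMeasurable (Function.uncurry G) (μ.prod μ) := by
    have hrw : Function.uncurry G
        = Set.indicator {p : ℝ × ℝ | p.1 < p.2} (fun p => ⟪u p.1, u p.2⟫) := by
      ext p
      simp [Function.uncurry, hGdef, Set.indicator_apply]
    rw [hrw]
    exact (hum.comp_fst.inner hum.comp_snd).indicator (measurableSet_lt measurable_fst measurable_snd)
  have hG_int : Integrable (Function.uncurry G) (μ.prod μ) := by
    refine (hu'.norm.mul_prod hu'.norm).mono' hG_meas ?_
    refine Filter.Eventually.of_forall fun p => ?_
    simp only [Function.uncurry, hGdef]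
    split_ifs
    · exact norm_inner_le_norm _ _
    · simp only [norm_zero]
      positivity
  have hsplit : ∀ s ∈ Icc (0:ℝ) t, w t = w s + ∫ r in Ioc s t, u r := by
    intro s hs
    rw [← setIntegral_union (Ioc_disjoint_Ioc_of_le le_rfl) measurableSet_Ioc
      (hu.mono_set (Ioc_subset_Ioc_right hs.2)) (hu.mono_set (Ioc_subset_Ioc_left hs.1)),
      Ioc_union_Ioc_eq_Ioc hs.1 hs.2]
  have hleft : ∀ s ∈ Ioc (0:ℝ) t, (∫ r, G s r ∂μ) = ⟪u s, ∫ r in Ioc s t, u r⟫ := by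
    intro s hs
    have hset : Ioc (0:ℝ) t ∩ Ioi s = Ioc s t := by
      ext r
      simp only [mem_inter_iff, mem_Ioc, mem_Ioi]
      exact ⟨fun h => ⟨h.2, h.1.2⟩, fun h => ⟨⟨hs.1.trans h.1, h.2⟩, h.1⟩⟩
    calc (∫ r, G s r ∂μ)
        = ∫ r in Ioc (0:ℝ) t, (Ioi s).indicator (fun r => ⟪u s, u r⟫) r := by
          refine setIntegral_congr_fun measurableSet_Ioc fun r _ => ?_
          simp [hGdef, Set.indicator_apply]
      _ = ∫ r in Ioc (0:ℝ) t ∩ Ioi s, ⟪u s, u r⟫ := setIntegral_indicator measurableSet_Ioi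
      _ = ∫ r in Ioc s t, ⟪u s, u r⟫ := by rw [hset]
      _ = ⟪u s, ∫ r in Ioc s t, u r⟫ :=
          integral_inner (hu.mono_set (Ioc_subset_Ioc_left hs.1.le)) (u s)
  have hright : ∀ r ∈ Ioc (0:ℝ) t, (∫ s, G s r ∂μ) = ⟪w r, u r⟫ := by
    intro r hr
    have hset : Ioc (0:ℝ) t ∩ Iio r = Ioo 0 r := by
      ext s
      simp only [mem_inter_iff, mem_Ioc, mem_Iio, mem_Ioo]
      exact ⟨fun h => ⟨h.1.1, h.2⟩, fun h => ⟨⟨h.1, (h.2.le.trans hr.2)⟩, h.2⟩⟩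
    calc (∫ s, G s r ∂μ)
        = ∫ s in Ioc (0:ℝ) t, (Iio r).indicator (fun s => ⟪u s, u r⟫) s := by
          refine setIntegral_congr_fun measurableSet_Ioc fun s _ => ?_
          simp [hGdef, Set.indicator_apply]
      _ = ∫ s in Ioc (0:ℝ) t ∩ Iio r, ⟪u s, u r⟫ := setIntegral_indicator measurableSet_Iio
      _ = ∫ s in Ioo (0:ℝ) r, ⟪u s, u r⟫ := by rw [hset]
      _ = ∫ s in Ioc (0:ℝ) r, ⟪u s, u r⟫ := (integral_Ioc_eq_integral_Ioo).symm
      _ = ∫ s in Ioc (0:ℝ) r, ⟪u r, u s⟫ := by simp_rw [real_inner_comm]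
      _ = ⟪u r, w r⟫ := integral_inner (hu.mono_set (Ioc_subset_Ioc_right hr.2)) (u r)
      _ = ⟪w r, u r⟫ := real_inner_comm _ _
  have hB_int : Integrable (fun s => ∫ r, G s r ∂μ) μ := hG_int.integral_prod_left
  have key : ⟪w t, w t⟫ = 2 * ∫ s in Ioc (0:ℝ) t, ⟪w s, u s⟫ := by
    have h1 : ⟪w t, w t⟫ = ∫ s, ⟪w t, u s⟫ ∂μ := (integral_inner hu' (w t)).symm
    have h2 : ∫ s, ⟪w t, u s⟫ ∂μ = ∫ s, (⟪w s, u s⟫ + ∫ r, G s r ∂μ) ∂μ := by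
      refine setIntegral_congr_fun measurableSet_Ioc fun s hs => ?_
      rw [hleft s hs, hsplit s (Ioc_subset_Icc_self hs), inner_add_left,
        real_inner_comm (∫ r in Ioc s t, u r) (u s)]
    have h3 : ∫ s, (⟪w s, u s⟫ + ∫ r, G s r ∂μ) ∂μ
        = (∫ s, ⟪w s, u s⟫ ∂μ) + ∫ s, (∫ r, G s r ∂μ) ∂μ := integral_add hg_int hB_int
    have h4 : (∫ s, (∫ r, G s r ∂μ) ∂μ) = ∫ r, (∫ s, G s r ∂μ) ∂μ :=
      integral_integral_swap hG_int
    have h5 : (∫ r, (∫ s, G s r ∂μ) ∂μ) = ∫ r, ⟪w r, u r⟫ ∂μ :=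
      setIntegral_congr_fun measurableSet_Ioc fun r hr => hright r hr
    rw [h1, h2, h3, h4, h5]; ring
  have hint : ∫ s, ⟪c + w s, u s⟫ ∂μ
      = (∫ s, ⟪c, u s⟫ ∂μ) + ∫ s, ⟪w s, u s⟫ ∂μ := by
    simp_rw [inner_add_left]
    exact integral_add (hu'.const_inner c) hg_int
  have hc : ∫ s, ⟪c, u s⟫ ∂μ = ⟪c, w t⟫ := integral_inner hu' c
  have hn : ‖c + w t‖ ^ 2 = ‖c‖ ^ 2 + 2 * ⟪c, w t⟫ + ‖w t‖ ^ 2 := by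
    rw [← real_inner_self_eq_norm_sq, ← real_inner_self_eq_norm_sq,
      ← real_inner_self_eq_norm_sq]
    simp only [inner_add_left, inner_add_right]
    rw [real_inner_comm (w t) c]; ring
  have hwt : ‖w t‖ ^ 2 = ⟪w t, w t⟫ := (real_inner_self_eq_norm_sq _).symm
  rw [hn, hwt, key, hint, hc]
  ring

end Aux

theorem gradient_flow_contraction_of_convex {n : ℕ}
    (F : EuclideanSpace ℝ (Fin n) → ℝ) (hF : ConvexOn ℝ Set.univ F)
    (T : ℝ) (hT : 0 < T)
    (x₁ x₂ v₁ v₂ : ℝ → EuclideanSpace ℝ (Fin n))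
    -- absolute continuity of the curves: each `xᵢ` is the integral of an integrable
    -- velocity `vᵢ` (its a.e. derivative)
    (hv₁ : IntervalIntegrable v₁ volume 0 T)
    (hv₂ : IntervalIntegrable v₂ volume 0 T)
    (hx₁ : ∀ t ∈ Set.Icc (0 : ℝ) T, x₁ t = x₁ 0 + ∫ s in (0 : ℝ)..t, v₁ s)
    (hx₂ : ∀ t ∈ Set.Icc (0 : ℝ) T, x₂ t = x₂ 0 + ∫ s in (0 : ℝ)..t, v₂ s)
    -- the differential inclusion `xᵢ'(t) ∈ -∂F(xᵢ(t))` for a.e. `t ∈ (0,T)`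
    (hincl₁ : ∀ᵐ t ∂(volume.restrict (Set.Ioo (0 : ℝ) T)), v₁ t ∈ -subdiff F (x₁ t))
    (hincl₂ : ∀ᵐ t ∂(volume.restrict (Set.Ioo (0 : ℝ) T)), v₂ t ∈ -subdiff F (x₂ t)) :
    (∀ t ∈ Set.Icc (0 : ℝ) T, ‖x₁ t - x₂ t‖ ≤ ‖x₁ 0 - x₂ 0‖) ∧
      (x₁ 0 = x₂ 0 → ∀ t ∈ Set.Icc (0 : ℝ) T, x₁ t = x₂ t) := by
  classical
  set c : EuclideanSpace ℝ (Fin n) := x₁ 0 - x₂ 0 with hcdef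
  set u : ℝ → EuclideanSpace ℝ (Fin n) := fun s => v₁ s - v₂ s with hudef
  -- the difference formula
  have hdiff : ∀ s ∈ Set.Icc (0 : ℝ) T, x₁ s - x₂ s = c + ∫ r in Set.Ioc (0:ℝ) s, u r := by
    intro s hs
    have hsub : Set.uIcc (0:ℝ) s ⊆ Set.uIcc (0:ℝ) T :=
      Set.uIcc_subset_uIcc Set.left_mem_uIcc (by rw [Set.uIcc_of_le hT.le]; exact hs)
    have h1 : IntervalIntegrable v₁ volume 0 s := hv₁.mono_set hsub
    have h2 : IntervalIntegrable v₂ volume 0 s := hv₂.mono_set hsub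
    rw [hx₁ s hs, hx₂ s hs]
    have : (∫ r in (0:ℝ)..s, v₁ r) - ∫ r in (0:ℝ)..s, v₂ r = ∫ r in (0:ℝ)..s, u r :=
      (intervalIntegral.integral_sub h1 h2).symm
    rw [show x₁ 0 + (∫ r in (0:ℝ)..s, v₁ r) - (x₂ 0 + ∫ r in (0:ℝ)..s, v₂ r)
        = c + ((∫ r in (0:ℝ)..s, v₁ r) - ∫ r in (0:ℝ)..s, v₂ r) by rw [hcdef]; abel, this,
      intervalIntegral.integral_of_le hs.1]
  -- monotonicity of the subdifferential, a.e. pointwise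
  have hsq : ∀ t ∈ Set.Icc (0 : ℝ) T, ‖x₁ t - x₂ t‖ ^ 2 ≤ ‖c‖ ^ 2 := by
    intro t ht
    have hut : IntegrableOn u (Set.Ioc 0 t) := by
      have : IntervalIntegrable u volume 0 t :=
        (hv₁.mono_set (Set.uIcc_subset_uIcc Set.left_mem_uIcc
            (by rw [Set.uIcc_of_le hT.le]; exact ht))).sub
          (hv₂.mono_set (Set.uIcc_subset_uIcc Set.left_mem_uIcc
            (by rw [Set.uIcc_of_le hT.le]; exact ht)))
      exact (intervalIntegrable_iff_integrableOn_Ioc_of_le ht.1).mp this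
    rw [hdiff t ht, primitive_norm_sq u c t hut]
    have hneg : (∫ s in Set.Ioc (0:ℝ) t,
        (inner ℝ (c + ∫ r in Set.Ioc (0:ℝ) s, u r) (u s) : ℝ)) ≤ 0 := by
      rw [MeasureTheory.integral_Ioc_eq_integral_Ioo]
      refine integral_nonpos_of_ae ?_
      have hm₁ := ae_restrict_of_ae_restrict_of_subset
        (Set.Ioo_subset_Ioo_right ht.2) hincl₁
      have hm₂ := ae_restrict_of_ae_restrict_of_subset
        (Set.Ioo_subset_Ioo_right ht.2) hincl₂
      filter_upwards [ae_restrict_mem measurableSet_Ioo, hm₁, hm₂] with s hs h₁ h₂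
      have hsIcc : s ∈ Set.Icc (0 : ℝ) T := ⟨hs.1.le, hs.2.le.trans ht.2⟩
      simp only [Pi.zero_apply]
      rw [← hdiff s hsIcc]
      rw [Set.mem_neg] at h₁ h₂
      have k₁ := h₁ (x₂ s)
      have k₂ := h₂ (x₁ s)
      have e₁ : (inner ℝ (-v₁ s) (x₂ s - x₁ s) : ℝ) = inner ℝ (v₁ s) (x₁ s - x₂ s) := by
        rw [inner_neg_left, ← inner_neg_right, neg_sub]
      have e₂ : (inner ℝ (-v₂ s) (x₁ s - x₂ s) : ℝ) = -inner ℝ (v₂ s) (x₁ s - x₂ s) := by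
        rw [inner_neg_left]
      have egoal : (inner ℝ (x₁ s - x₂ s) (u s) : ℝ)
          = inner ℝ (v₁ s) (x₁ s - x₂ s) - inner ℝ (v₂ s) (x₁ s - x₂ s) := by
        rw [real_inner_comm, hudef]
        simp [inner_sub_left]
      rw [egoal]
      rw [e₁] at k₁
      rw [e₂] at k₂
      linarith [k₁, k₂]
    nlinarith [hneg]
  have main : ∀ t ∈ Set.Icc (0 : ℝ) T, ‖x₁ t - x₂ t‖ ≤ ‖x₁ 0 - x₂ 0‖ := by
    intro t ht
    have := hsq t ht
    nlinarith [norm_nonneg (x₁ t - x₂ t), norm_nonneg c]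
  refine ⟨main, fun h0 t ht => ?_⟩
  have := main t ht
  rw [h0, sub_self, norm_zero] at this
  have : ‖x₁ t - x₂ t‖ = 0 := le_antisymm this (norm_nonneg _)
  rwa [norm_eq_zero, sub_eq_zero] at this
end

section
/- Let (X,d) be a metric space, F : X → ℝ ∪ {+∞} with inf F > −∞, x₀ ∈ X with F(x₀) < +∞, and τ > 0. Suppose the scheme x^τ_{k+1} ∈ argmin_x [ F(x) + d(x, x^τ_k)²/(2τ) ] admits minimizers at every step, and define the piecewise constant interpolation x^τ(t) := x^τ_k for t ∈ ((k−1)τ, kτ]. Then there is a constant C, depending only on F(x₀) − inf F, such that for all 0 ≤ t < s ≤ T one has d(x^τ(t), x^τ(s)) ≤ C( |t−s|^{1/2} + τ^{1/2} ). -/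
private lemma my_sqrt_add_le (a b : ℝ) (ha : 0 ≤ a) (hb : 0 ≤ b) :
    Real.sqrt (a + b) ≤ Real.sqrt a + Real.sqrt b := by
  have h : a + b ≤ (Real.sqrt a + Real.sqrt b) ^ 2 := by
    nlinarith [Real.sq_sqrt ha, Real.sq_sqrt hb, Real.sqrt_nonneg a, Real.sqrt_nonneg b]
  calc Real.sqrt (a + b) ≤ Real.sqrt ((Real.sqrt a + Real.sqrt b) ^ 2) :=
        Real.sqrt_le_sqrt h
    _ = _ := Real.sqrt_sq (by positivity)

/-!
STATEMENT 4: Discrete Hölder estimate for the minimizing movement scheme in a metric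
space. There is a constant `C`, depending only on `F(x₀) - inf F`, such that the
piecewise constant interpolation `x^τ(t) := x^τ_k` for `t ∈ ((k-1)τ, kτ]` (i.e.
`x^τ(t) = x^τ_{⌈t/τ⌉}`) satisfies
`d(x^τ(t), x^τ(s)) ≤ C(|t-s|^{1/2} + τ^{1/2})` for all `0 ≤ t < s ≤ T`.
-/

theorem minimizing_movement_discrete_holder {X : Type*} [MetricSpace X]
    (F : X → EReal) (m : ℝ)
    -- `inf F > -∞`: `m` is a finite lower bound for `F`
    (hm : ∀ x, (m : EReal) ≤ F x)
    (x₀ : X) (hx₀ : F x₀ < ⊤) :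
    -- a constant depending only on `F(x₀) - inf F` (through the lower bound `m`)
    ∃ C : ℝ, C = Real.sqrt (2 * ((F x₀).toReal - m)) ∧
      ∀ T τ : ℝ, 0 < τ → ∀ xs : ℕ → X, xs 0 = x₀ →
        -- `xs (k+1)` minimizes `x ↦ F(x) + d(x, xs k)²/(2τ)`
        (∀ (k : ℕ) (y : X),
          F (xs (k + 1)) + ((dist (xs (k + 1)) (xs k) ^ 2 / (2 * τ) : ℝ) : EReal)
            ≤ F y + ((dist y (xs k) ^ 2 / (2 * τ) : ℝ) : EReal)) →
        ∀ t s : ℝ, 0 ≤ t → t < s → s ≤ T →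
          dist (xs ⌈t / τ⌉₊) (xs ⌈s / τ⌉₊) ≤ C * (Real.sqrt (s - t) + Real.sqrt τ) := by
  set C := Real.sqrt (2 * ((F x₀).toReal - m)) with hC
  refine ⟨C, rfl, ?_⟩
  intro T τ hτ xs hxs0 hmin t s ht hts hsT
  set e : ℕ → ℝ := fun k => (F (xs k)).toReal with he
  set d : ℕ → ℝ := fun k => dist (xs (k + 1)) (xs k) with hd
  have hstep : ∀ k, F (xs (k + 1)) + ((d k ^ 2 / (2 * τ) : ℝ) : EReal) ≤ F (xs k) := by
    intro k
    have h := hmin k (xs k)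
    simpa [dist_self, hd] using h
  have hnbot : ∀ k, F (xs k) ≠ ⊥ := fun k => fun hb => by
    have := hm (xs k); rw [hb] at this; exact (EReal.coe_ne_bot m) (le_bot_iff.mp this)
  have hntop : ∀ k, F (xs k) ≠ ⊤ := by
    intro k
    induction k with
    | zero => rw [hxs0]; exact hx₀.ne
    | succ k ih =>
      intro htop
      have h := hstep k
      rw [htop] at h
      have : (⊤ : EReal) ≤ F (xs k) := by
        rwa [EReal.top_add_of_ne_bot (EReal.coe_ne_bot _)] at h
      exact ih (top_le_iff.mp this)
  have hstepR : ∀ k, e (k + 1) + d k ^ 2 / (2 * τ) ≤ e k := by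
    intro k
    have h := hstep k
    rw [← EReal.coe_toReal (hntop (k+1)) (hnbot (k+1)),
        ← EReal.coe_toReal (hntop k) (hnbot k), ← EReal.coe_add] at h
    exact_mod_cast h
  have hmR : ∀ k, m ≤ e k := by
    intro k
    have h := hm (xs k)
    rw [← EReal.coe_toReal (hntop k) (hnbot k)] at h
    exact_mod_cast h
  have hsum : ∀ n, ∑ k ∈ Finset.range n, d k ^ 2 / (2 * τ) ≤ e 0 - e n := by
    intro n
    induction n with
    | zero => simp
    | succ n ih =>
      rw [Finset.sum_range_succ]
      have := hstepR n
      linarith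
  have he0 : e 0 = (F x₀).toReal := by rw [he]; simp [hxs0]
  have hem : 0 ≤ e 0 - m := by linarith [hmR 0]
  have hsum2 : ∀ i j : ℕ, ∑ k ∈ Finset.Ico i j, d k ^ 2 ≤ 2 * τ * (e 0 - m) := by
    intro i j
    have h1 : ∑ k ∈ Finset.Ico i j, d k ^ 2 ≤ ∑ k ∈ Finset.range j, d k ^ 2 := by
      apply Finset.sum_le_sum_of_subset_of_nonneg
      · intro x hx; simp at hx ⊢; exact hx.2
      · intros; positivity
    have h2 : ∑ k ∈ Finset.range j, d k ^ 2 / (2 * τ) ≤ e 0 - m :=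
      le_trans (hsum j) (by linarith [hmR j])
    rw [← Finset.sum_div] at h2
    have := (div_le_iff₀ (by positivity : (0:ℝ) < 2 * τ)).mp h2
    linarith
  set i := ⌈t / τ⌉₊ with hi
  set j := ⌈s / τ⌉₊ with hj
  have hij : i ≤ j := Nat.ceil_le_ceil (by gcongr)
  have hdist : dist (xs i) (xs j) ≤
      Real.sqrt (((j - i : ℕ) : ℝ) * (2 * τ * (e 0 - m))) := by
    have h1 : dist (xs i) (xs j) ≤ ∑ k ∈ Finset.Ico i j, d k := by
      refine le_trans (dist_le_Ico_sum_dist xs hij) (le_of_eq ?_)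
      exact Finset.sum_congr rfl fun k _ => dist_comm _ _
    have h2 : (∑ k ∈ Finset.Ico i j, d k) ^ 2 ≤ ((j - i : ℕ) : ℝ) * (2 * τ * (e 0 - m)) := by
      calc (∑ k ∈ Finset.Ico i j, d k) ^ 2
          ≤ (Finset.Ico i j).card * ∑ k ∈ Finset.Ico i j, d k ^ 2 :=
            sq_sum_le_card_mul_sum_sq
        _ ≤ ((j - i : ℕ) : ℝ) * (2 * τ * (e 0 - m)) := by
            rw [Nat.card_Ico]
            apply mul_le_mul_of_nonneg_left (hsum2 i j) (Nat.cast_nonneg _)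
    have h3 : ∑ k ∈ Finset.Ico i j, d k ≤
        Real.sqrt (((j - i : ℕ) : ℝ) * (2 * τ * (e 0 - m))) :=
      Real.le_sqrt_of_sq_le h2
    exact le_trans h1 h3
  have hji : ((j - i : ℕ) : ℝ) * τ ≤ (s - t) + τ := by
    have h1 : (j : ℝ) < s / τ + 1 := Nat.ceil_lt_add_one (div_nonneg (by linarith) hτ.le)
    have h2 : t / τ ≤ (i : ℝ) := Nat.le_ceil _
    have h3 : ((j - i : ℕ) : ℝ) = (j : ℝ) - (i : ℝ) := by
      rw [Nat.cast_sub hij]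
    rw [h3]
    have hdiv : (s - t) / τ * τ = s - t := div_mul_cancel₀ _ hτ.ne'
    have h5 : s / τ - t / τ = (s - t) / τ := (sub_div s t τ).symm
    have h4 : (j : ℝ) - (i : ℝ) ≤ (s - t) / τ + 1 := by linarith
    nlinarith [mul_le_mul_of_nonneg_right h4 hτ.le]
  calc dist (xs i) (xs j)
      ≤ Real.sqrt (((j - i : ℕ) : ℝ) * (2 * τ * (e 0 - m))) := hdist
    _ = C * Real.sqrt (((j - i : ℕ) : ℝ) * τ) := by
        rw [show ((j - i : ℕ) : ℝ) * (2 * τ * (e 0 - m))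
            = (2 * ((F x₀).toReal - m)) * (((j - i : ℕ) : ℝ) * τ) by rw [← he0]; ring,
          Real.sqrt_mul (by rw [← he0]; positivity), hC]
    _ ≤ C * Real.sqrt ((s - t) + τ) := by
        apply mul_le_mul_of_nonneg_left (Real.sqrt_le_sqrt hji) (Real.sqrt_nonneg _)
    _ ≤ C * (Real.sqrt (s - t) + Real.sqrt τ) := by
        apply mul_le_mul_of_nonneg_left
          (my_sqrt_add_le _ _ (by linarith) hτ.le) (Real.sqrt_nonneg _)
end

section
/- Let (X,d) be a geodesic metric space and let F : X → ℝ ∪ {+∞} be λ-geodesically convex, i.e. for every pair x₀, x₁ with F(x₀), F(x₁) < ∞ there exists a constant-speed geodesic x(t) from x₀ to x₁ with F(x(t)) ≤ (1−t)F(x₀) + tF(x₁) − (λ/2)t(1−t)d(x₀,x₁)² for all t ∈ [0,1]. Then for every x with F(x) < +∞ the descending slope admits the representation |∇⁻F|(x) = sup_{y ≠ x} [ (F(x) − F(y))/d(x,y) + (λ/2) d(x,y) ]₊. -/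
/-!
STATEMENT 6: In a geodesic metric space, for a λ-geodesically convex function
`F : X → ℝ ∪ {+∞}` and `x` with `F(x) < +∞`, the descending slope has the pointwise
representation `|∇⁻F|(x) = sup_{y ≠ x} [ (F(x) - F(y))/d(x,y) + (λ/2) d(x,y) ]₊`.
-/

open Filter Topology

/-- The descending slope `|∇⁻F|(x) = limsup_{y→x} [F(x) - F(y)]₊ / d(x,y)`. -/
noncomputable def descSlope {X : Type*} [MetricSpace X] (F : X → EReal) (x : X) : EReal :=
  Filter.limsup (fun y => ((F x - F y) * (((dist x y)⁻¹ : ℝ) : EReal)) ⊔ 0) (𝓝[≠] x)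

/-- `γ` is a constant-speed geodesic from `x` to `y`, parametrized on `[0,1]`. -/
def IsConstSpeedGeodesic {X : Type*} [MetricSpace X] (γ : ℝ → X) (x y : X) : Prop :=
  γ 0 = x ∧ γ 1 = y ∧
    ∀ s ∈ Set.Icc (0 : ℝ) 1, ∀ t ∈ Set.Icc (0 : ℝ) 1,
      dist (γ s) (γ t) = |s - t| * dist x y

theorem slope_sup_representation_of_geodesically_convex {X : Type*} [MetricSpace X]
    (lam : ℝ) (F : X → EReal)
    -- `F` is valued in `ℝ ∪ {+∞}` (never `-∞`)
    (hFbot : ∀ x, F x ≠ ⊥)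
    -- `(X, d)` is a geodesic space
    (hgeo : ∀ x y : X, ∃ γ : ℝ → X, IsConstSpeedGeodesic γ x y)
    -- `F` is λ-geodesically convex: between any two points of its finiteness domain
    -- there is a constant-speed geodesic along which the λ-convexity inequality holds
    (hconv : ∀ x y : X, F x < ⊤ → F y < ⊤ → ∃ γ : ℝ → X, IsConstSpeedGeodesic γ x y ∧
      ∀ t ∈ Set.Icc (0 : ℝ) 1,
        F (γ t) ≤ ((1 - t : ℝ) : EReal) * F x + ((t : ℝ) : EReal) * F y
          - ((lam / 2 * (t * (1 - t)) * dist x y ^ 2 : ℝ) : EReal))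
    (x : X) (hFx : F x < ⊤) :
    descSlope F x =
      ⨆ y ∈ {y : X | y ≠ x},
        (((F x - F y) * (((dist x y)⁻¹ : ℝ) : EReal)
            + ((lam / 2 * dist x y : ℝ) : EReal)) ⊔ 0) := by
  set g : X → EReal := fun y => ((F x - F y) * (((dist x y)⁻¹ : ℝ) : EReal)) ⊔ 0 with hg
  set S : EReal := ⨆ y ∈ {y : X | y ≠ x},
        (((F x - F y) * (((dist x y)⁻¹ : ℝ) : EReal)
            + ((lam / 2 * dist x y : ℝ) : EReal)) ⊔ 0) with hS
  show limsup g (𝓝[≠] x) = S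
  by_cases hex : ∃ y : X, y ≠ x
  swap
  · -- degenerate case : no point other than x
    push_neg at hex
    have h1 : ({x}ᶜ : Set X) = ∅ := by ext y; simp [hex y]
    have h2 : {y : X | y ≠ x} = ∅ := by ext y; simp [hex y]
    rw [nhdsWithin, h1]
    simp [hS, h2, hex]
  obtain ⟨y₀, hy₀⟩ := hex
  -- the punctured neighborhood filter is nontrivial
  have hne : (𝓝[≠] x).NeBot := by
    rw [← mem_closure_iff_nhdsWithin_neBot, Metric.mem_closure_iff]
    intro ε hε
    obtain ⟨γ, hγ0, hγ1, hγd⟩ := hgeo x y₀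
    have hd0 : (0:ℝ) < dist x y₀ := dist_pos.2 (Ne.symm hy₀)
    set t : ℝ := min 1 (ε / (2 * dist x y₀)) with ht
    have ht0 : 0 < t := lt_min one_pos (by positivity)
    have ht1 : t ≤ 1 := min_le_left _ _
    have hdt : dist x (γ t) = t * dist x y₀ := by
      have := hγd 0 ⟨le_refl 0, zero_le_one⟩ t ⟨ht0.le, ht1⟩
      rw [hγ0] at this
      rw [this, abs_of_nonpos (by linarith), neg_sub, sub_zero]
    refine ⟨γ t, ?_, ?_⟩
    · simp only [Set.mem_compl_iff, Set.mem_singleton_iff]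
      intro h
      rw [h, dist_self] at hdt
      nlinarith
    · rw [hdt]
      calc t * dist x y₀ ≤ (ε / (2 * dist x y₀)) * dist x y₀ := by
            apply mul_le_mul_of_nonneg_right (min_le_right _ _) hd0.le
        _ = ε / 2 := by field_simp
        _ < ε := by linarith
  have hlimsup0 : (0 : EReal) ≤ limsup g (𝓝[≠] x) := by
    apply le_limsup_of_frequently_le'
    exact Eventually.frequently (Eventually.of_forall (fun y => le_sup_right))
  -- key lower bound
  have key : ∀ y : X, y ≠ x → F y < ⊤ →
      (F x - F y) * (((dist x y)⁻¹ : ℝ) : EReal) + ((lam / 2 * dist x y : ℝ) : EReal)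
        ≤ limsup g (𝓝[≠] x) := by
    intro y hyx hFy
    set d : ℝ := dist x y with hd
    have hd0 : (0:ℝ) < d := dist_pos.2 (Ne.symm hyx)
    obtain ⟨γ, ⟨hγ0, hγ1, hγd⟩, hγF⟩ := hconv x y hFx hFy
    set fx : ℝ := (F x).toReal with hfx'
    set fy : ℝ := (F y).toReal with hfy'
    have hfx : F x = (fx : EReal) := (EReal.coe_toReal hFx.ne (hFbot x)).symm
    have hfy : F y = (fy : EReal) := (EReal.coe_toReal hFy.ne (hFbot y)).symm
    have hdist : ∀ t ∈ Set.Icc (0:ℝ) 1, dist x (γ t) = t * d := by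
      intro t ht
      have := hγd 0 ⟨le_refl 0, zero_le_one⟩ t ht
      rw [hγ0] at this
      rw [this, abs_of_nonpos (by linarith [ht.1]), neg_sub, sub_zero]
    set r : ℝ → ℝ := fun t => (fx - fy) / d + lam / 2 * (1 - t) * d with hr
    have hbound : ∀ t ∈ Set.Ioc (0:ℝ) 1, ((r t : ℝ) : EReal) ≤ g (γ t) := by
      intro t ht
      have ht' : t ∈ Set.Icc (0:ℝ) 1 := ⟨ht.1.le, ht.2⟩
      have h1 : F (γ t) ≤ (((1 - t) * fx + t * fy - lam / 2 * (t * (1 - t)) * d ^ 2 : ℝ) : EReal) := by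
        refine le_trans (hγF t ht') (le_of_eq ?_)
        rw [hfx, hfy, hd]
        norm_cast
      have h2 : ((fx - ((1 - t) * fx + t * fy - lam / 2 * (t * (1 - t)) * d ^ 2) : ℝ) : EReal)
          ≤ F x - F (γ t) := by
        rw [EReal.coe_sub, ← hfx]
        exact EReal.sub_le_sub le_rfl h1
      have h3 : (((fx - ((1 - t) * fx + t * fy - lam / 2 * (t * (1 - t)) * d ^ 2)) * (t * d)⁻¹ : ℝ) : EReal)
          ≤ (F x - F (γ t)) * (((dist x (γ t))⁻¹ : ℝ) : EReal) := by
        rw [hdist t ht', EReal.coe_mul]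
        exact mul_le_mul_of_nonneg_right h2
          (EReal.coe_nonneg.2 (inv_nonneg.2 (mul_nonneg ht.1.le hd0.le)))
      have htne : t ≠ 0 := ne_of_gt ht.1
      have heq : r t
          = (fx - ((1 - t) * fx + t * fy - lam / 2 * (t * (1 - t)) * d ^ 2)) * (t * d)⁻¹ := by
        rw [hr]
        field_simp
        ring
      rw [heq]
      exact le_trans h3 le_sup_left
    have hcurve : Tendsto γ (𝓝[>] (0:ℝ)) (𝓝[≠] x) := by
      rw [tendsto_nhdsWithin_iff]
      constructor
      · rw [tendsto_iff_dist_tendsto_zero]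
        have hev : ∀ᶠ t in 𝓝[>] (0:ℝ), dist (γ t) x = t * d := by
          filter_upwards [Ioc_mem_nhdsGT one_pos] with t ht
          rw [dist_comm]
          exact hdist t ⟨ht.1.le, ht.2⟩
        have : Tendsto (fun t : ℝ => t * d) (𝓝[>] (0:ℝ)) (𝓝 0) := by
          have : Tendsto (fun t : ℝ => t * d) (𝓝 (0:ℝ)) (𝓝 (0 * d)) :=
            (continuous_id.mul continuous_const).tendsto 0
          simpa using this.mono_left nhdsWithin_le_nhds
        exact Tendsto.congr' (hev.mono fun t h => h.symm) this
      · filter_upwards [Ioc_mem_nhdsGT one_pos] with t ht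
        have : dist x (γ t) = t * d := hdist t ⟨ht.1.le, ht.2⟩
        simp only [Set.mem_compl_iff, Set.mem_singleton_iff]
        intro h
        rw [h, dist_self] at this
        nlinarith [ht.1]
    have hrt : Tendsto (fun t => ((r t : ℝ) : EReal)) (𝓝[>] (0:ℝ)) (𝓝 ((r 0 : ℝ) : EReal)) := by
      apply Tendsto.mono_left _ nhdsWithin_le_nhds
      rw [EReal.tendsto_coe]
      apply Continuous.tendsto
      fun_prop
    have hmain : ((r 0 : ℝ) : EReal) ≤ limsup g (𝓝[≠] x) := by
      calc ((r 0 : ℝ) : EReal) = liminf (fun t => ((r t : ℝ) : EReal)) (𝓝[>] (0:ℝ)) :=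
            (hrt.liminf_eq).symm
        _ ≤ liminf (fun t => g (γ t)) (𝓝[>] (0:ℝ)) := by
            refine liminf_le_liminf ?_ (by isBoundedDefault) (by isBoundedDefault)
            filter_upwards [Ioc_mem_nhdsGT one_pos] with t ht
            exact hbound t ht
        _ ≤ limsup (fun t => g (γ t)) (𝓝[>] (0:ℝ)) := liminf_le_limsup
        _ = limsup g (map γ (𝓝[>] (0:ℝ))) := by
            rw [limsup, limsup, map_map]; rfl
        _ ≤ limsup g (𝓝[≠] x) := limsup_le_limsup_of_le hcurve
    refine le_trans (le_of_eq ?_) hmain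
    rw [hfx, hfy, ← EReal.coe_sub, ← EReal.coe_mul, ← EReal.coe_add, EReal.coe_eq_coe_iff, hr]
    simp only [sub_zero, mul_one]
    ring
  -- S is nonneg
  have hS0 : (0 : EReal) ≤ S := by
    rw [hS]
    refine le_trans le_sup_right (le_iSup₂ (f := fun y (_ : y ∈ {y : X | y ≠ x}) =>
      (((F x - F y) * (((dist x y)⁻¹ : ℝ) : EReal)
            + ((lam / 2 * dist x y : ℝ) : EReal)) ⊔ 0)) y₀ hy₀)
  -- lower bound : S ≤ limsup
  have hlow : S ≤ limsup g (𝓝[≠] x) := by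
    rw [hS]
    refine iSup₂_le fun y hy => ?_
    refine sup_le ?_ hlimsup0
    by_cases hFy : F y < ⊤
    · exact key y hy hFy
    · have : F y = ⊤ := by
        rcases lt_or_eq_of_le (le_top : F y ≤ ⊤) with h | h
        · exact absurd h hFy
        · exact h
      rw [this, EReal.sub_top]
      have hd0 : (0:ℝ) < (dist x y)⁻¹ := by
        have : (0:ℝ) < dist x y := dist_pos.2 (Ne.symm hy)
        positivity
      rw [EReal.bot_mul_coe_of_pos hd0, EReal.bot_add]
      exact bot_le
  -- upper bound : limsup ≤ S
  have hup : limsup g (𝓝[≠] x) ≤ S := by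
    have hle : ∀ ε : ℝ, 0 < ε → limsup g (𝓝[≠] x) ≤ S + (ε : EReal) := by
      intro ε hε
      set δ : ℝ := ε / (1 + |lam| / 2) with hδ
      have hδ0 : 0 < δ := by positivity
      apply limsup_le_of_le (by isBoundedDefault)
      have hball : Metric.ball x δ ∈ 𝓝[≠] x :=
        nhdsWithin_le_nhds (Metric.ball_mem_nhds x hδ0)
      filter_upwards [hball, self_mem_nhdsWithin] with y hyb hyx
      have hyx' : y ≠ x := hyx
      have hd0 : (0:ℝ) < dist x y := dist_pos.2 (Ne.symm hyx')
      have hdδ : dist x y < δ := by rwa [dist_comm, ← Metric.mem_ball]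
      set A : EReal := (F x - F y) * (((dist x y)⁻¹ : ℝ) : EReal) with hA
      set c : ℝ := lam / 2 * dist x y with hc
      have h1 : A + (c : EReal) ≤ S := by
        rw [hS]
        refine le_trans le_sup_left (le_iSup₂ (f := fun y (_ : y ∈ {y : X | y ≠ x}) =>
          (((F x - F y) * (((dist x y)⁻¹ : ℝ) : EReal)
                + ((lam / 2 * dist x y : ℝ) : EReal)) ⊔ 0)) y hyx')
      have h2 : A ≤ S + ((-c : ℝ) : EReal) := by
        have : A = (A + (c : EReal)) + ((-c : ℝ) : EReal) := by
          rw [EReal.coe_neg, ← sub_eq_add_neg, EReal.add_sub_cancel_right]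
        rw [this]
        exact add_le_add_left h1 _
      have h3 : ((-c : ℝ) : EReal) ≤ (ε : EReal) := by
        apply EReal.coe_le_coe_iff.2
        have hcc : |c| ≤ ε := by
          rw [hc, abs_mul, abs_of_pos hd0]
          calc |lam / 2| * dist x y ≤ (|lam| / 2) * δ := by
                apply mul_le_mul _ hdδ.le hd0.le (by positivity)
                rw [abs_div]; simp
            _ ≤ (1 + |lam| / 2) * δ := by nlinarith [abs_nonneg lam]
            _ = ε := by rw [hδ]; field_simp
        linarith [neg_abs_le c, le_abs_self c]
      have h4 : A ≤ S + (ε : EReal) := le_trans h2 (add_le_add_right h3 S)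
      have h5 : (0 : EReal) ≤ S + (ε : EReal) :=
        add_nonneg hS0 (EReal.coe_nonneg.2 hε.le)
      exact sup_le h4 h5
    refine EReal.le_of_forall_lt_iff_le.1 fun z hz => ?_
    have hSnetop : S ≠ ⊤ := (hz.trans_le le_top).ne
    have hSnebot : S ≠ ⊥ := ne_bot_of_le_ne_bot (by simp) hS0
    set s : ℝ := S.toReal with hs'
    have hs : S = (s : EReal) := (EReal.coe_toReal hSnetop hSnebot).symm
    have hsz : s < z := by rw [hs] at hz; exact_mod_cast hz
    calc limsup g (𝓝[≠] x) ≤ S + (((z - s) / 2 : ℝ) : EReal) := hle _ (by linarith)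
      _ = ((s + (z - s) / 2 : ℝ) : EReal) := by rw [hs, ← EReal.coe_add]
      _ ≤ (z : EReal) := EReal.coe_le_coe_iff.2 (by linarith)
  exact le_antisymm hup hlow
end
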